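/- arXiv:2401.06587 — 5 statements merged into one kernel-verified Lean document; each statement's English description precedes it below -/
import Mathlib

section
/- For every λ₀ ∈ (0,1) and every α > 0 there exists a smooth function f : ℝ → ℝ, defined on all of [0,∞), satisfying the initial value problem f(0) = 1, f'(0) = 0, and f''(s) = (αλ₀²/2)·f(s)^(−α−1) for all s ≥ 0, and moreover f(s) ≥ 1 and f''(s) > 0 for all s ≥ 0. -/
open Set Filter MeasureTheory intervalIntegral FormalMultilinearSeries
open scoped ENNReal NNReal ContDiff

/-- A primitive of a real-analytic function is real-analytic. -/
lemma analyticAt_of_primitive {ψ Φ : ℝ → ℝ} {x₀ : ℝ}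
    (hψ : AnalyticAt ℝ ψ x₀)
    (hΦ : ∀ᶠ z in nhds (0:ℝ), Φ (x₀ + z) = Φ x₀ + ∫ t in (0:ℝ)..z, ψ (x₀ + t)) :
    AnalyticAt ℝ Φ x₀ := by
  obtain ⟨p, r, hpr⟩ := hψ
  obtain ⟨ρ, hρ0, hρr⟩ := ENNReal.lt_iff_exists_nnreal_btwn.mp hpr.r_pos
  have hρ0' : (0:ℝ) < (ρ:ℝ) := by exact_mod_cast ENNReal.coe_pos.mp hρ0
  have hsum : Summable fun n => ‖p n‖ * (ρ:ℝ)^n :=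
    p.summable_norm_mul_pow (hρr.trans_le hpr.r_le)
  set b : ℕ → ℝ := fun n => Nat.rec (Φ x₀) (fun m _ => p.coeff m / (m+1)) n with hb
  set q : FormalMultilinearSeries ℝ ℝ ℝ :=
    fun n => ContinuousMultilinearMap.mkPiRing ℝ (Fin n) (b n) with hq
  have hqcoeff : ∀ n, q.coeff n = b n := by
    intro n
    simp [hq, FormalMultilinearSeries.coeff]
  refine ⟨q, ?_⟩
  rw [hasFPowerSeriesAt_iff]
  obtain ⟨δ, hδ0, hΦδ⟩ := Metric.eventually_nhds_iff.mp hΦ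
  have hmem : Metric.ball (0:ℝ) (min δ ρ) ∈ nhds (0:ℝ) :=
    Metric.ball_mem_nhds _ (lt_min hδ0 hρ0')
  filter_upwards [hmem] with z hz
  rw [Metric.mem_ball, Real.dist_eq, sub_zero, lt_min_iff] at hz
  obtain ⟨hzδ, hzρ⟩ := hz
  -- termwise integration
  have key : HasSum (fun n => ∫ t in (0:ℝ)..z, p.coeff n * t^n)
      (∫ t in (0:ℝ)..z, ψ (x₀ + t)) := by
    apply intervalIntegral.hasSum_integral_of_dominated_convergence
      (bound := fun n _ => ‖p n‖ * (ρ:ℝ)^n)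
    · exact fun n => ((continuous_const.mul (continuous_pow n)).aestronglyMeasurable)
    · intro n
      filter_upwards with t ht
      have h1 : |t| ≤ |z| := by
        rw [Set.mem_uIoc] at ht
        rcases ht with ⟨h1, h2⟩ | ⟨h1, h2⟩ <;> rw [abs_le] <;>
          constructor <;> simp [abs_le] at * <;> nlinarith [abs_nonneg z, le_abs_self z, neg_abs_le z]
      have h2 : |t| ≤ (ρ:ℝ) := h1.trans hzρ.le
      calc ‖p.coeff n * t^n‖ = ‖p.coeff n‖ * |t|^n := by
            rw [norm_mul, norm_pow]; rfl
        _ ≤ ‖p n‖ * (ρ:ℝ)^n := by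
            rw [p.norm_apply_eq_norm_coef]
            exact mul_le_mul_of_nonneg_left (pow_le_pow_left₀ (abs_nonneg t) h2 n)
              (norm_nonneg _)
    · filter_upwards with t _; exact hsum
    · exact intervalIntegrable_const
    · filter_upwards with t ht
      have h1 : |t| ≤ |z| := by
        rw [Set.mem_uIoc] at ht
        rcases ht with ⟨h1, h2⟩ | ⟨h1, h2⟩ <;> rw [abs_le] <;>
          constructor <;> simp [abs_le] at * <;> nlinarith [abs_nonneg z, le_abs_self z, neg_abs_le z]
      have hball : t ∈ Metric.eball (0:ℝ) r := by
        rw [Metric.mem_eball, edist_dist, Real.dist_eq, sub_zero]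
        calc ENNReal.ofReal |t| ≤ ENNReal.ofReal (ρ:ℝ) := ENNReal.ofReal_le_ofReal (h1.trans hzρ.le)
          _ = (ρ : ℝ≥0∞) := ENNReal.ofReal_coe_nnreal
          _ < r := hρr
      have := hpr.hasSum hball
      simp only [apply_eq_pow_smul_coeff, smul_eq_mul] at this
      simpa [mul_comm] using this
  have hval : ∀ n, (∫ t in (0:ℝ)..z, p.coeff n * t^n) = z^(n+1) • q.coeff (n+1) := by
    intro n
    rw [intervalIntegral.integral_const_mul, integral_pow, hqcoeff]
    simp only [hb, smul_eq_mul]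
    push_cast
    ring
  simp only [hval] at key
  have h0 : z^(0:ℕ) • q.coeff 0 = Φ x₀ := by
    rw [hqcoeff]; simp [hb]
  refine (hasSum_nat_add_iff' (f := fun n => z^n • q.coeff n) 1).mp ?_
  rw [Finset.sum_range_one, hΦδ (by rwa [Real.dist_eq, sub_zero] : dist z 0 < δ), h0,
    add_sub_cancel_left]
  exact key
/-- Global existence of the sphere warping function: for `λ₀ ∈ (0,1)` and `α > 0` there is a
smooth solution `f : ℝ → ℝ` on all of `[0,∞)` of the IVP `f(0) = 1`, `f'(0) = 0`,
`f'' = (αλ₀²/2)·f^(−α−1)`, and moreover `f ≥ 1` and `f'' > 0` on `[0,∞)`. -/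
theorem sphere_warping_global_existence (lam0 α : ℝ)
    (hlam0 : lam0 ∈ Set.Ioo (0:ℝ) 1) (hα : 0 < α) :
    ∃ f : ℝ → ℝ, ContDiff ℝ (⊤ : ℕ∞) f ∧ f 0 = 1 ∧ deriv f 0 = 0 ∧
      (∀ s : ℝ, 0 ≤ s → deriv (deriv f) s = α * lam0^2 / 2 * (f s) ^ (-α - 1)) ∧
      (∀ s : ℝ, 0 ≤ s → 1 ≤ f s) ∧
      (∀ s : ℝ, 0 ≤ s → 0 < deriv (deriv f) s) := by
  obtain ⟨hl0, hl1⟩ := hlam0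
  set l : ℝ := lam0 with hldef
  set c : ℝ := α * l^2/2 with hc
  have hc0 : 0 < c := by positivity
  set P : ℝ → ℝ := fun w => 1 - w^2/l^2 with hP
  set ψ : ℝ → ℝ := fun w => c⁻¹ * P w ^ (-((α+1)/α)) with hψdef
  set Φ : ℝ → ℝ := fun v => ∫ t in (0:ℝ)..v, ψ t with hΦdef
  set I : Set ℝ := Set.Ioo (-l) l with hI
  have hIopen : IsOpen I := isOpen_Ioo
  have hI0 : (0:ℝ) ∈ I := Set.mem_Ioo.mpr ⟨by linarith, hl0⟩
  have hPpos : ∀ w ∈ I, 0 < P w := by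
    intro w hw
    obtain ⟨h1, h2⟩ := hw
    have : w^2 < l^2 := by nlinarith
    have hl2 : (0:ℝ) < l^2 := by positivity
    simp only [hP, sub_pos]
    rw [div_lt_one hl2]; exact this
  have hPle : ∀ w : ℝ, P w ≤ 1 := by
    intro w; simp only [hP]
    have : 0 ≤ w^2/l^2 := by positivity
    linarith
  have hψpos : ∀ w ∈ I, 0 < ψ w := by
    intro w hw
    exact mul_pos (inv_pos.mpr hc0) (Real.rpow_pos_of_pos (hPpos w hw) _)
  have hPcd : ContDiff ℝ ω P := by
    have : ContDiff ℝ ω (fun w : ℝ => w^2/l^2) := (contDiff_id.pow 2).div_const _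
    exact contDiff_const.sub this
  have hψcd : ∀ w ∈ I, ContDiffAt ℝ ω ψ w := by
    intro w hw
    exact contDiffAt_const.mul
      (hPcd.contDiffAt.rpow_const_of_ne (ne_of_gt (hPpos w hw)))
  have hψcont : ContinuousOn ψ I := fun w hw =>
    ((hψcd w hw).continuousAt).continuousWithinAt
  have hIordconn : Set.OrdConnected I := Set.ordConnected_Ioo
  have hψint : ∀ a b : ℝ, a ∈ I → b ∈ I → IntervalIntegrable ψ volume a b := by
    intro a b ha hb
    exact (hψcont.mono (hIordconn.uIcc_subset ha hb)).intervalIntegrable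
  have hΦd : ∀ v ∈ I, HasDerivAt Φ (ψ v) v := by
    intro v hv
    exact intervalIntegral.integral_hasDerivAt_right (hψint 0 v hI0 hv)
      (hψcont.stronglyMeasurableAtFilter hIopen v hv)
      ((hψcd v hv).continuousAt)
  have hΦcont : ContinuousOn Φ I := fun v hv =>
    (hΦd v hv).continuousAt.continuousWithinAt
  have hΦmono : StrictMonoOn Φ I := by
    apply strictMonoOn_of_deriv_pos (convex_Ioo _ _) hΦcont
    intro x hx
    rw [interior_Ioo] at hx
    rw [(hΦd x hx).deriv]
    exact hψpos x hx
  have hΦ0 : Φ 0 = 0 := intervalIntegral.integral_same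
  -- growth bound
  have hgrow : ∀ t : ℝ, 0 ≤ t → ∃ w ∈ I, 0 ≤ w ∧ t ≤ Φ w := by
    intro t ht
    set X : ℝ := -(2 * c * t / l) with hX
    set w : ℝ := l - l * Real.exp X with hw
    have hexp_pos : 0 < Real.exp X := Real.exp_pos _
    have hexp_le : Real.exp X ≤ 1 := by
      rw [Real.exp_le_one_iff]
      rw [hX]
      have : 0 ≤ 2 * c * t / l := by positivity
      linarith
    have hw0 : 0 ≤ w := by nlinarith
    have hwl : w < l := by nlinarith
    have hwI : w ∈ I := ⟨by linarith, hwl⟩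
    refine ⟨w, hwI, hw0, ?_⟩
    set g : ℝ → ℝ := fun u => l / (2*c) * (l - u)⁻¹ with hg
    have hgcont : ContinuousOn g (Set.uIcc (0:ℝ) w) := by
      rw [Set.uIcc_of_le hw0]
      apply continuousOn_const.mul
      apply ContinuousOn.inv₀ (continuousOn_const.sub (continuous_id.continuousOn))
      intro u hu hcon
      have hul : u < l := lt_of_le_of_lt hu.2 hwl
      change l - u = 0 at hcon
      linarith
    have hgint : IntervalIntegrable g volume 0 w := hgcont.intervalIntegrable
    have hbound : ∀ u ∈ Set.Icc (0:ℝ) w, g u ≤ ψ u := by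
      intro u hu
      have huI : u ∈ I := ⟨by linarith [hu.1], lt_of_le_of_lt hu.2 hwl⟩
      have hx0 : 0 < P u := hPpos u huI
      have hul : u < l := lt_of_le_of_lt hu.2 hwl
      have hlu : 0 < l - u := by linarith
      have h1 : P u ^ (-(1:ℝ)) ≤ P u ^ (-((α+1)/α)) := by
        apply Real.rpow_le_rpow_of_exponent_ge hx0 (hPle u)
        have h1α : (1:ℝ) ≤ (α+1)/α := by
          rw [le_div_iff₀ hα]; linarith
        linarith
      have h2 : P u ≤ 2 * (l - u) / l := by
        have hPeq : P u = (l - u) * (l + u) / l^2 := by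
          rw [hP]; field_simp; ring
        rw [hPeq]
        rw [div_le_div_iff₀ (by positivity) hl0]
        nlinarith [hu.1, mul_nonneg (mul_nonneg hlu.le hl0.le) hlu.le]
      have h3 : (2 * (l - u) / l)⁻¹ ≤ (P u)⁻¹ := inv_anti₀ hx0 h2
      have h5 : g u ≤ c⁻¹ * (P u)⁻¹ := by
        have h4 : g u = c⁻¹ * (2 * (l - u) / l)⁻¹ := by
          simp only [hg, inv_div]
          field_simp
        rw [h4]
        exact mul_le_mul_of_nonneg_left h3 (by positivity)
      refine h5.trans ?_
      rw [hψdef]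
      simp only
      rw [← Real.rpow_neg_one (P u)]
      exact mul_le_mul_of_nonneg_left h1 (by positivity)
    have hFTC : ∫ u in (0:ℝ)..w, g u = l/(2*c) * (Real.log l - Real.log (l - w)) := by
      have hder : ∀ u ∈ Set.uIcc (0:ℝ) w, HasDerivAt (fun u => -(l/(2*c)) * Real.log (l - u)) (g u) u := by
        intro u hu
        rw [Set.uIcc_of_le hw0] at hu
        have hlu : l - u ≠ 0 := by
          have : u < l := lt_of_le_of_lt hu.2 hwl
          intro hcon; linarith
        have hlog : HasDerivAt (fun u : ℝ => Real.log (l - u)) (-1 / (l - u)) u := by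
          have := ((hasDerivAt_id u).const_sub l).log hlu
          simpa using this
        have := hlog.const_mul (-(l/(2*c)))
        refine this.congr_deriv ?_
        rw [hg]
        field_simp
      rw [intervalIntegral.integral_eq_sub_of_hasDerivAt hder hgint]
      simp only [sub_zero]
      ring
    have hval : l/(2*c) * (Real.log l - Real.log (l - w)) = t := by
      have hlw : l - w = l * Real.exp X := by rw [hw]; ring
      rw [hlw, Real.log_mul (ne_of_gt hl0) (ne_of_gt hexp_pos), Real.log_exp, hX]
      field_simp
      ring
    calc t = ∫ u in (0:ℝ)..w, g u := by rw [hFTC, hval]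
      _ ≤ ∫ u in (0:ℝ)..w, ψ u := by
          apply intervalIntegral.integral_mono_on hw0 hgint
            (hψint 0 w hI0 hwI) hbound
      _ = Φ w := rfl
  have hψeven : ∀ t, ψ (-t) = ψ t := by
    intro t; simp only [hψdef, hP, neg_sq]
  have hodd : ∀ w ∈ I, Φ (-w) = - Φ w := by
    intro w hw
    have h1 : ∫ t in (0:ℝ)..w, ψ (-t) = ∫ t in (-w)..(0:ℝ), ψ t := by
      simpa using intervalIntegral.integral_comp_neg (a := (0:ℝ)) (b := w) (f := ψ)
    have h0 : Φ w = - Φ (-w) := by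
      calc Φ w = ∫ t in (0:ℝ)..w, ψ (-t) := by simp only [hψeven]; rfl
        _ = ∫ t in (-w)..(0:ℝ), ψ t := h1
        _ = - ∫ t in (0:ℝ)..(-w), ψ t := by rw [intervalIntegral.integral_symm]
        _ = - Φ (-w) := rfl
    linarith
  have hsurj : ∀ t : ℝ, ∃ w ∈ I, Φ w = t := by
    intro t
    rcases le_total 0 t with h | h
    · obtain ⟨b, hb, hb0, hbt⟩ := hgrow t h
      have hsub : Set.Icc (0:ℝ) b ⊆ I := fun x hx =>
        ⟨by linarith [hx.1], lt_of_le_of_lt hx.2 hb.2⟩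
      have hmem : t ∈ Set.Icc (Φ 0) (Φ b) := ⟨by rw [hΦ0]; exact h, hbt⟩
      obtain ⟨x, hx, hxt⟩ := intermediate_value_Icc hb0 (hΦcont.mono hsub) hmem
      exact ⟨x, hsub hx, hxt⟩
    · obtain ⟨b, hb, hb0, hbt⟩ := hgrow (-t) (by linarith)
      have hnb : -b ∈ I := ⟨by linarith [hb.2], by linarith [hb.1]⟩
      have hsub : Set.Icc (-b) (0:ℝ) ⊆ I := fun x hx =>
        ⟨lt_of_lt_of_le hnb.1 hx.1, lt_of_le_of_lt hx.2 hl0⟩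
      have hmemt : t ∈ Set.Icc (Φ (-b)) (Φ 0) :=
        ⟨by rw [hodd b hb]; linarith, by rw [hΦ0]; linarith⟩
      obtain ⟨x, hx, hxt⟩ := intermediate_value_Icc (by linarith : -b ≤ (0:ℝ))
        (hΦcont.mono hsub) hmemt
      exact ⟨x, hsub hx, hxt⟩
  -- the order isomorphism
  set Φ' : I → ℝ := fun w => Φ w with hΦ'
  have hΦ'mono : StrictMono Φ' := fun a b hab => hΦmono a.2 b.2 hab
  have hΦ'surj : Function.Surjective Φ' := by
    intro t; obtain ⟨v, hv, hvt⟩ := hsurj t; exact ⟨⟨v, hv⟩, hvt⟩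
  set eiso := StrictMono.orderIsoOfSurjective Φ' hΦ'mono hΦ'surj with heiso
  set v : ℝ → ℝ := fun s => (eiso.symm s : ℝ) with hv
  have hvmem : ∀ s, v s ∈ I := fun s => (eiso.symm s).2
  have hvcont : Continuous v := continuous_subtype_val.comp eiso.symm.continuous
  have hcoe : ⇑eiso = Φ' := StrictMono.coe_orderIsoOfSurjective Φ' hΦ'mono hΦ'surj
  have hΦv : ∀ s, Φ (v s) = s := by
    intro s
    calc Φ (v s) = Φ' (eiso.symm s) := rfl
      _ = eiso (eiso.symm s) := (congrFun hcoe (eiso.symm s)).symm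
      _ = s := eiso.apply_symm_apply s

  have hvΦ : ∀ x ∈ I, v (Φ x) = x := by
    intro x hx
    have : eiso.symm (Φ' ⟨x, hx⟩) = ⟨x, hx⟩ := by
      rw [heiso]; exact (StrictMono.orderIsoOfSurjective Φ' hΦ'mono hΦ'surj).symm_apply_apply _
    simpa [hv] using congrArg Subtype.val this
  have hv0 : v 0 = 0 := by
    have := hvΦ 0 hI0; rwa [hΦ0] at this
  -- Φ is real-analytic on I
  have hΦan : ∀ x ∈ I, AnalyticAt ℝ Φ x := by
    intro x hx
    apply analyticAt_of_primitive ((hψcd x hx).analyticAt)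
    obtain ⟨h1, h2⟩ := hx
    have hδ : (0:ℝ) < min (x + l) (l - x) := lt_min (by linarith) (by linarith)
    filter_upwards [Metric.ball_mem_nhds (0:ℝ) hδ] with z hz
    rw [Metric.mem_ball, Real.dist_eq, sub_zero, lt_min_iff] at hz
    obtain ⟨hz1, hz2⟩ := hz
    obtain ⟨hz1', hz1''⟩ := abs_lt.mp hz1
    obtain ⟨hz2', hz2''⟩ := abs_lt.mp hz2
    have hxz : x + z ∈ I := ⟨by linarith, by linarith⟩
    have hadd : Φ x + ∫ t in x..(x+z), ψ t = Φ (x+z) :=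
      intervalIntegral.integral_add_adjacent_intervals (hψint 0 x hI0 ⟨h1, h2⟩)
        (hψint x (x+z) ⟨h1, h2⟩ hxz)
    rw [← hadd]
    congr 1
    rw [intervalIntegral.integral_comp_add_left]
    norm_num
  -- the partial homeomorphism
  set PH : OpenPartialHomeomorph ℝ ℝ :=
    { toFun := Φ
      invFun := v
      source := I
      target := Set.univ
      map_source' := fun _ _ => Set.mem_univ _
      map_target' := fun s _ => hvmem s
      left_inv' := fun x hx => hvΦ x hx
      right_inv' := fun s _ => hΦv s
      open_source := hIopen
      open_target := isOpen_univ
      continuousOn_toFun := hΦcont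
      continuousOn_invFun := hvcont.continuousOn } with hPH
  have hvcd : ∀ s, ContDiffAt ℝ ω v s := by
    intro s
    have h1 : PH.symm s = v s := rfl
    have h2 : ContDiffAt ℝ ω PH.symm s := by
      apply PH.contDiffAt_symm_deriv (f₀' := ψ (v s)) (ne_of_gt (hψpos _ (hvmem s)))
        (Set.mem_univ s)
      · exact hΦd (v s) (hvmem s)
      · exact (hΦan (v s) (hvmem s)).contDiffAt
    exact h2.congr_of_eventuallyEq (Filter.Eventually.of_forall fun y => rfl)
  -- v solves v' = c * P(v)^((α+1)/α)
  have hvd : ∀ s, HasDerivAt v (c * P (v s) ^ ((α+1)/α)) s := by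
    intro s
    have h1 : HasDerivAt v ((ψ (v s))⁻¹) s := by
      apply HasDerivAt.of_local_left_inverse (hvcont.continuousAt)
        (hΦd (v s) (hvmem s)) (ne_of_gt (hψpos _ (hvmem s)))
      filter_upwards with y
      exact hΦv y
    convert h1 using 1
    simp only [hψdef]
    rw [mul_inv, inv_inv, Real.rpow_neg (hPpos _ (hvmem s)).le, inv_inv]
  -- the warping function
  set f : ℝ → ℝ := fun s => P (v s) ^ (-α⁻¹ : ℝ) with hf
  have hfd : ∀ s, HasDerivAt f (v s) s := by
    intro s
    have hx0 : 0 < P (v s) := hPpos _ (hvmem s)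
    have h2 : HasDerivAt (fun s => P (v s))
        (-(2 * v s ^ 1 * (c * P (v s) ^ ((α+1)/α)) / l^2)) s := by
      have := (((hvd s).pow 2).div_const (l^2)).const_sub 1
      simpa [hP] using this
    have h3 := h2.rpow_const (p := (-α⁻¹ : ℝ)) (Or.inl (ne_of_gt hx0))
    convert h3 using 1
    have key : P (v s) ^ ((α+1)/α) * P (v s) ^ (-α⁻¹ - 1 : ℝ) = 1 := by
      rw [← Real.rpow_add hx0]
      have : (α+1)/α + (-α⁻¹ - 1) = 0 := by field_simp; ring
      rw [this, Real.rpow_zero]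
    have hα' : α ≠ 0 := ne_of_gt hα
    have hl' : l ≠ 0 := ne_of_gt hl0
    have expand : -(2 * v s ^ 1 * (c * P (v s) ^ ((α+1)/α)) / l^2) * (-α⁻¹)
        * P (v s) ^ (-α⁻¹ - 1 : ℝ)
        = (2 * c / (α * l^2)) * v s * (P (v s) ^ ((α+1)/α) * P (v s) ^ (-α⁻¹ - 1 : ℝ)) := by
      field_simp
    rw [expand, key, hc]
    field_simp
  have hderivf : deriv f = v := funext fun s => (hfd s).deriv
  -- smoothness
  have hfcd : ContDiff ℝ (⊤ : ℕ∞) f := by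
    rw [contDiff_iff_contDiffAt]
    intro s
    have hcomp : ContDiffAt ℝ ω (fun s => P (v s)) s :=
      hPcd.contDiffAt.comp s (hvcd s)
    exact (hcomp.rpow_const_of_ne (p := (-α⁻¹ : ℝ)) (ne_of_gt (hPpos _ (hvmem s)))).of_le le_top
  refine ⟨f, hfcd, ?_, ?_, ?_, ?_, ?_⟩
  · simp only [hf, hv0, hP]
    norm_num
  · rw [hderivf]; exact hv0
  · intro s _
    rw [hderivf, (hvd s).deriv]
    have hx0 : 0 < P (v s) := hPpos _ (hvmem s)
    have hexp : (-α⁻¹ : ℝ) * (-α - 1) = (α+1)/α := by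
      field_simp
      ring
    simp only [hf]
    rw [← Real.rpow_mul hx0.le, hexp]
  · intro s _
    have hx0 : 0 < P (v s) := hPpos _ (hvmem s)
    exact Real.one_le_rpow_of_pos_of_le_one_of_nonpos hx0 (hPle _)
      (neg_nonpos.mpr (inv_nonneg.mpr hα.le))
  · intro s _
    rw [hderivf, (hvd s).deriv]
    exact mul_pos hc0 (Real.rpow_pos_of_pos (hPpos _ (hvmem s)) _)
end

section
/- Fix real parameters λ₀ ∈ (0,1) and α > 0, and let f : ℝ → ℝ be smooth with f(s) > 0 for all s ≥ 0, satisfying f(0) = 1, f'(0) = 0, and f''(s) = (αλ₀²/2)·f(s)^(−α−1) for all s ≥ 0. Then f'(s) → λ₀ as s → ∞, and consequently for every λ ∈ (0, λ₀) there exists a unique s_λ > 0 with f'(s_λ) = λ. -/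
open Filter Set Real


/-- Limit of the derivative: for a solution of `f'' = (αλ₀²/2)·f^(−α−1)` with `f(0) = 1`,
`f'(0) = 0` one has `f'(s) → λ₀` as `s → ∞`, and consequently for every `λ ∈ (0, λ₀)` there is
a unique `s_λ > 0` with `f'(s_λ) = λ`. -/
theorem sphere_warping_deriv_limit (lam0 α : ℝ)
    (hlam0 : lam0 ∈ Set.Ioo (0:ℝ) 1) (hα : 0 < α)
    (f : ℝ → ℝ) (hf : ContDiff ℝ (⊤ : ℕ∞) f)
    (hfpos : ∀ s : ℝ, 0 ≤ s → 0 < f s)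
    (hf0 : f 0 = 1) (hf'0 : deriv f 0 = 0)
    (hode : ∀ s : ℝ, 0 ≤ s → deriv (deriv f) s = α * lam0^2 / 2 * (f s) ^ (-α - 1)) :
    Filter.Tendsto (deriv f) Filter.atTop (nhds lam0) ∧
    (∀ lam : ℝ, lam ∈ Set.Ioo (0:ℝ) lam0 → ∃! slam : ℝ, 0 < slam ∧ deriv f slam = lam) := by
  obtain ⟨hl0, hl1⟩ := hlam0
  have hdf : Differentiable ℝ f := hf.differentiable (by simp)
  have hcd' : ContDiff ℝ ((⊤:ℕ∞):WithTop ℕ∞) (deriv f) := (contDiff_infty_iff_deriv.mp (hf.of_le (by simp))).2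
  have hdf' : Differentiable ℝ (deriv f) := hcd'.differentiable (by simp)
  have hpos'' : ∀ s : ℝ, 0 ≤ s → 0 < deriv (deriv f) s := by
    intro s hs
    rw [hode s hs]
    have := hfpos s hs
    positivity
  have hsm : StrictMonoOn (deriv f) (Ici 0) := by
    apply strictMonoOn_of_deriv_pos (convex_Ici 0) hdf'.continuous.continuousOn
    intro x hx
    rw [interior_Ici] at hx
    exact hpos'' x hx.le
  have hf'nonneg : ∀ s : ℝ, 0 ≤ s → 0 ≤ deriv f s := by
    intro s hs
    rcases eq_or_lt_of_le hs with h | h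
    · rw [← h, hf'0]
    · have := hsm (self_mem_Ici) (mem_Ici.2 hs) h
      rw [hf'0] at this
      exact this.le
  -- first integral
  have hg : ∀ s : ℝ, 0 ≤ s → (deriv f s)^2 + lam0^2 * (f s) ^ (-α) = lam0^2 := by
    intro b hb
    set g := fun s => (deriv f s)^2 + lam0^2 * (f s) ^ (-α) with hgdef
    have key : ∀ x ∈ Icc (0:ℝ) b, g x = g 0 := by
      apply constant_of_has_deriv_right_zero
      · apply ContinuousOn.add
        · exact (hdf'.continuous.continuousOn.pow 2)
        · exact continuousOn_const.mul
            (hdf.continuous.continuousOn.rpow_const fun x hx => Or.inl (hfpos x hx.1).ne')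
      · intro x hx
        have hx0 : 0 ≤ x := hx.1
        have h1 : HasDerivAt (fun s => (deriv f s)^2)
            ((2:ℕ) * (deriv f x) ^ (2-1) * deriv (deriv f) x) x :=
          (hdf' x).hasDerivAt.pow 2
        have h2 : HasDerivAt (fun s => (f s) ^ (-α))
            (deriv f x * (-α) * (f x) ^ (-α - 1)) x :=
          (hdf x).hasDerivAt.rpow_const (Or.inl (hfpos x hx0).ne')
        have h3 : HasDerivAt g
            ((2:ℕ) * (deriv f x) ^ (2-1) * deriv (deriv f) x
              + lam0^2 * (deriv f x * (-α) * (f x) ^ (-α - 1))) x :=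
          h1.add (h2.const_mul _)
        have h4 : (2:ℕ) * (deriv f x) ^ (2-1) * deriv (deriv f) x
              + lam0^2 * (deriv f x * (-α) * (f x) ^ (-α - 1)) = 0 := by
          rw [hode x hx0]
          push_cast
          ring
        rw [h4] at h3
        exact h3.hasDerivWithinAt
    have := key b (mem_Icc.2 ⟨hb, le_rfl⟩)
    rw [hgdef] at this
    simp only [hf'0, hf0, Real.one_rpow] at this
    rw [this]
    ring
  have hf'le : ∀ s : ℝ, 0 ≤ s → deriv f s ≤ lam0 := by
    intro s hs
    have h1 := hg s hs
    have h2 : 0 < (f s) ^ (-α) := Real.rpow_pos_of_pos (hfpos s hs) _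
    nlinarith [hf'nonneg s hs, sq_nonneg (deriv f s - lam0), sq_nonneg (deriv f s + lam0)]
  have h1pos : 0 < deriv f 1 := by
    have := hsm (self_mem_Ici) (mem_Ici.2 zero_le_one) one_pos
    rwa [hf'0] at this
  -- linear lower bound for f
  have hmono : MonotoneOn (fun s => f s - deriv f 1 * s) (Ici 1) := by
    apply monotoneOn_of_deriv_nonneg (convex_Ici 1)
    · exact (hdf.continuous.sub (continuous_const.mul continuous_id)).continuousOn
    · exact (hdf.sub ((differentiable_id.const_mul _))).differentiableOn
    · intro x hx
      rw [interior_Ici] at hx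
      have hD : HasDerivAt (fun s => f s - deriv f 1 * s) (deriv f x - deriv f 1 * 1) x :=
        (hdf x).hasDerivAt.sub ((hasDerivAt_id x).const_mul _)
      rw [hD.deriv]
      have : deriv f 1 ≤ deriv f x :=
        (hsm.monotoneOn) (mem_Ici.2 zero_le_one) (mem_Ici.2 (by linarith [hx.out])) hx.out.le
      linarith
  have hlinle : ∀ s : ℝ, 1 ≤ s → f 1 + deriv f 1 * (s - 1) ≤ f s := by
    intro s hs
    have := hmono (self_mem_Ici) (mem_Ici.2 hs) hs
    simp only at this
    linarith
  have hftop : Tendsto f atTop atTop := by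
    have hlt : Tendsto (fun s : ℝ => f 1 + deriv f 1 * (s - 1)) atTop atTop := by
      apply tendsto_atTop_add_const_left
      exact (tendsto_atTop_add_const_right _ _ tendsto_id).const_mul_atTop h1pos
    apply tendsto_atTop_mono' atTop _ hlt
    filter_upwards [eventually_ge_atTop (1:ℝ)] with s hs using hlinle s hs
  have hrpow : Tendsto (fun s => (f s) ^ (-α)) atTop (nhds 0) :=
    (tendsto_rpow_neg_atTop hα).comp hftop
  have hsq : Tendsto (fun s => (deriv f s)^2) atTop (nhds (lam0^2)) := by
    have h1 : Tendsto (fun s => lam0^2 - lam0^2 * (f s) ^ (-α)) atTop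
        (nhds (lam0^2 - lam0^2 * 0)) := tendsto_const_nhds.sub (tendsto_const_nhds.mul hrpow)
    rw [mul_zero, sub_zero] at h1
    apply h1.congr'
    filter_upwards [eventually_ge_atTop (0:ℝ)] with s hs
    have := hg s hs
    linarith
  have hlim : Tendsto (deriv f) atTop (nhds lam0) := by
    have h1 : Tendsto (fun s => Real.sqrt ((deriv f s)^2)) atTop
        (nhds (Real.sqrt (lam0^2))) := hsq.sqrt
    rw [Real.sqrt_sq hl0.le] at h1
    apply h1.congr'
    filter_upwards [eventually_ge_atTop (0:ℝ)] with s hs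
    exact Real.sqrt_sq (hf'nonneg s hs)
  refine ⟨hlim, ?_⟩
  rintro lam ⟨hlam0', hlamlt⟩
  obtain ⟨s₀, hs₀gt, hs₀0⟩ :=
    ((hlim.eventually_const_lt hlamlt).and (eventually_ge_atTop (0:ℝ))).exists
  have hivt := intermediate_value_Icc hs₀0 (hdf'.continuous.continuousOn (s := Icc 0 s₀))
  have hmem : lam ∈ Icc (deriv f 0) (deriv f s₀) := by
    rw [hf'0]
    exact ⟨hlam0'.le, hs₀gt.le⟩
  obtain ⟨t, ht, htv⟩ := hivt hmem
  have htpos : 0 < t := by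
    rcases eq_or_lt_of_le ht.1 with h | h
    · exfalso; rw [← h] at htv; rw [hf'0] at htv; linarith
    · exact h
  refine ⟨t, ⟨htpos, htv⟩, ?_⟩
  rintro y ⟨hy, hyv⟩
  exact hsm.injOn (mem_Ici.2 hy.le) (mem_Ici.2 ht.1) (by rw [hyv, htv])
end

section
/- Fix real parameters λ₀ ∈ (0,1) and α > 0, and let f : ℝ → ℝ be smooth with f(s) > 0 for all s ≥ 0, satisfying f(0) = 1, f'(0) = 0, and f''(s) = (αλ₀²/2)·f(s)^(−α−1) for all s ≥ 0. Define h : ℝ → ℝ by h = (2/(αλ₀²))·f'. Then every odd-order iterated derivative of f vanishes at s = 0 (f is formally even at 0), every even-order iterated derivative of h vanishes at s = 0 (h is formally odd at 0), and h'(0) = 1. -/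
open Set

/-- If two functions differentiable on `Ici 0` agree on `Ici 0`, their derivatives
agree on `Ici 0` (including the endpoint, by one-sidedness). -/
private lemma deriv_eqOn_Ici {u v : ℝ → ℝ}
    (hu : ∀ s ∈ Ici (0:ℝ), DifferentiableAt ℝ u s)
    (hv : ∀ s ∈ Ici (0:ℝ), DifferentiableAt ℝ v s)
    (heq : ∀ s ∈ Ici (0:ℝ), u s = v s) :
    ∀ s ∈ Ici (0:ℝ), deriv u s = deriv v s := by
  intro s hs
  rcases eq_or_lt_of_le (mem_Ici.mp hs) with h0 | h0
  · subst h0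
    have h1 : HasDerivWithinAt v (deriv u 0) (Ici 0) 0 :=
      ((hu 0 self_mem_Ici).hasDerivAt.hasDerivWithinAt).congr
        (fun t ht => (heq t ht).symm) (heq 0 self_mem_Ici).symm
    have h2 : derivWithin v (Ici 0) 0 = deriv u 0 :=
      h1.derivWithin (uniqueDiffOn_Ici 0 0 self_mem_Ici)
    have h3 : derivWithin v (Ici 0) 0 = deriv v 0 :=
      (hv 0 self_mem_Ici).derivWithin (uniqueDiffOn_Ici 0 0 self_mem_Ici)
    rw [← h2, h3]
  · have hev : u =ᶠ[nhds s] v := by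
      filter_upwards [Ioi_mem_nhds h0] with t ht using heq t (mem_Ici.mpr (le_of_lt ht))
    exact hev.deriv_eq

/-- Parity boundary conditions: for a solution of `f'' = (αλ₀²/2)·f^(−α−1)` with `f(0) = 1`,
`f'(0) = 0` and `h := (2/(αλ₀²))·f'`, the function `f` is formally even at `0` (all odd-order
iterated derivatives vanish at `0`), `h` is formally odd at `0` (all even-order iterated
derivatives vanish at `0`), and `h'(0) = 1`. -/
theorem sphere_warping_parity (lam0 α : ℝ)
    (hlam0 : lam0 ∈ Set.Ioo (0:ℝ) 1) (hα : 0 < α)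
    (f : ℝ → ℝ) (hf : ContDiff ℝ (⊤ : ℕ∞) f)
    (hfpos : ∀ s : ℝ, 0 ≤ s → 0 < f s)
    (hf0 : f 0 = 1) (hf'0 : deriv f 0 = 0)
    (hode : ∀ s : ℝ, 0 ≤ s → deriv (deriv f) s = α * lam0^2 / 2 * (f s) ^ (-α - 1))
    (h : ℝ → ℝ) (hh : ∀ s : ℝ, h s = 2 / (α * lam0^2) * deriv f s) :
    (∀ k : ℕ, Odd k → iteratedDeriv k f 0 = 0) ∧
    (∀ k : ℕ, Even k → iteratedDeriv k h 0 = 0) ∧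
    deriv h 0 = 1 := by
  obtain ⟨hl0, hl1⟩ := hlam0
  have hfi : ContDiff ℝ (⊤ : ℕ∞) f := hf.of_le (by simp)
  have hdf : ContDiff ℝ (⊤ : ℕ∞) (deriv f) := (contDiff_infty_iff_deriv.mp hfi).2
  have hfd : Differentiable ℝ f := hfi.differentiable (by simp)
  have hdfd : Differentiable ℝ (deriv f) := hdf.differentiable (by simp)
  have halam : α * lam0 ^ 2 ≠ 0 := by positivity
  -- energy identity
  set E : ℝ → ℝ := fun s => (deriv f s) ^ 2 - lam0 ^ 2 * (1 - f s ^ (-α)) with hE_def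
  have hE : ∀ s : ℝ, 0 ≤ s → HasDerivAt E 0 s := by
    intro s hs
    have h1 : HasDerivAt (deriv f) (deriv (deriv f) s) s := (hdfd s).hasDerivAt
    have h2 : HasDerivAt (fun t => (deriv f t) ^ 2)
        ((2:ℕ) * (deriv f s) ^ 1 * deriv (deriv f) s) s := h1.pow 2
    have h3 : HasDerivAt (fun t => f t ^ (-α))
        (deriv f s * (-α) * f s ^ (-α - 1)) s :=
      (hfd s).hasDerivAt.rpow_const (Or.inl (ne_of_gt (hfpos s hs)))
    have h4 : HasDerivAt E ((2:ℕ) * (deriv f s) ^ 1 * deriv (deriv f) s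
        - lam0 ^ 2 * (0 - deriv f s * (-α) * f s ^ (-α - 1))) s :=
      h2.sub (((hasDerivAt_const s (1:ℝ)).sub h3).const_mul (lam0 ^ 2))
    convert h4 using 1
    rw [hode s hs]; ring
  have energy : ∀ s : ℝ, 0 ≤ s → (deriv f s) ^ 2 = lam0 ^ 2 * (1 - f s ^ (-α)) := by
    intro s hs
    have hconst : E s = E 0 := by
      refine Convex.is_const_of_fderivWithin_eq_zero (convex_Ici (0:ℝ))
        (fun x hx => ((hE x hx).differentiableAt).differentiableWithinAt)
        (fun x hx => ?_) hs self_mem_Ici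
      have := ((hE x hx).hasDerivWithinAt (s := Ici (0:ℝ))).hasFDerivWithinAt.fderivWithin
        (uniqueDiffOn_Ici 0 x hx)
      rw [this]
      exact ContinuousLinearMap.ext fun y => by simp
    have hE0 : E 0 = 0 := by
      simp [hE_def, hf'0, hf0, Real.one_rpow]
    have := hconst.trans hE0
    simp only [hE_def] at this
    linarith
  -- representation of iterated derivatives
  have rep : ∀ m : ℕ, ∃ g : ℝ → ℝ, ContDiffOn ℝ (⊤ : ℕ∞) g (Ioi 0) ∧
      ∀ s : ℝ, 0 ≤ s →
        iteratedDeriv m f s = (if Even m then g (f s) else deriv f s * g (f s)) := by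
    intro m
    induction m with
    | zero =>
      exact ⟨id, contDiff_id.contDiffOn, fun s _ => by simp [iteratedDeriv_zero]⟩
    | succ m ih =>
      obtain ⟨g, hg, hrep⟩ := ih
      have hgat : ∀ x : ℝ, 0 < x → ContDiffAt ℝ (⊤ : ℕ∞) g x := fun x hx =>
        hg.contDiffAt (isOpen_Ioi.mem_nhds hx)
      have hg' : ContDiffOn ℝ (⊤ : ℕ∞) (deriv g) (Ioi 0) :=
        hg.deriv_of_isOpen isOpen_Ioi (by exact_mod_cast le_top)
      have hg'at : ∀ x : ℝ, 0 < x → ContDiffAt ℝ (⊤ : ℕ∞) (deriv g) x := fun x hx =>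
        hg'.contDiffAt (isOpen_Ioi.mem_nhds hx)
      have hidiff : ∀ s ∈ Ici (0:ℝ), DifferentiableAt ℝ (iteratedDeriv m f) s := by
        intro s _
        rw [iteratedDeriv_eq_iterate]
        exact (hfi.iterate_deriv m).differentiable (by simp) s
      by_cases hme : Even m
      · -- iteratedDeriv m f = g ∘ f on Ici 0
        have hcomp : ∀ s : ℝ, 0 ≤ s →
            HasDerivAt (fun t => g (f t)) (deriv g (f s) * deriv f s) s := by
          intro s hs
          exact (((hgat (f s) (hfpos s hs)).differentiableAt (by simp)).hasDerivAt).comp s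
            (hfd s).hasDerivAt
        refine ⟨deriv g, hg', fun s hs => ?_⟩
        have hodd : ¬ Even (m + 1) := by simp [Nat.even_add_one, hme]
        rw [if_neg hodd, iteratedDeriv_succ]
        have heq := deriv_eqOn_Ici hidiff
          (fun t ht => (hcomp t ht).differentiableAt)
          (fun t ht => by rw [hrep t ht, if_pos hme]) s hs
        rw [heq, (hcomp s hs).deriv]; ring
      · -- iteratedDeriv m f = f' * (g ∘ f) on Ici 0
        have hcomp : ∀ s : ℝ, 0 ≤ s →
            HasDerivAt (fun t => deriv f t * g (f t))
              (deriv (deriv f) s * g (f s) + deriv f s * (deriv g (f s) * deriv f s)) s := by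
          intro s hs
          have hgfs : HasDerivAt (fun t => g (f t)) (deriv g (f s) * deriv f s) s :=
            (((hgat (f s) (hfpos s hs)).differentiableAt (by simp)).hasDerivAt).comp s
              (hfd s).hasDerivAt
          exact (hdfd s).hasDerivAt.mul hgfs
        set g₂ : ℝ → ℝ := fun x =>
          α * lam0 ^ 2 / 2 * x ^ (-α - 1) * g x + lam0 ^ 2 * (1 - x ^ (-α)) * deriv g x
          with hg₂def
        have hg₂ : ContDiffOn ℝ (⊤ : ℕ∞) g₂ (Ioi 0) := by
          have hr : ∀ p : ℝ, ContDiffOn ℝ (⊤ : ℕ∞) (fun x : ℝ => x ^ p) (Ioi 0) :=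
            fun p x hx =>
              (Real.contDiffAt_rpow_const_of_ne (ne_of_gt (mem_Ioi.mp hx))).contDiffWithinAt
          exact (((contDiffOn_const.mul (hr (-α - 1))).mul hg).add
            ((contDiffOn_const.mul (contDiffOn_const.sub (hr (-α)))).mul hg'))
        refine ⟨g₂, hg₂, fun s hs => ?_⟩
        have heven : Even (m + 1) := by
          rcases Nat.even_or_odd m with hm | hm
          · exact absurd hm hme
          · exact hm.add_one
        rw [if_pos heven, iteratedDeriv_succ]
        have heq := deriv_eqOn_Ici hidiff
          (fun t ht => (hcomp t ht).differentiableAt)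
          (fun t ht => by rw [hrep t ht, if_neg hme]) s hs
        rw [heq, (hcomp s hs).deriv, hg₂def]
        simp only []
        rw [hode s hs]
        have hen : deriv f s * (deriv g (f s) * deriv f s)
            = lam0 ^ 2 * (1 - f s ^ (-α)) * deriv g (f s) := by
          rw [← energy s hs]; ring
        rw [hen]
  have part1 : ∀ k : ℕ, Odd k → iteratedDeriv k f 0 = 0 := by
    intro k hk
    obtain ⟨g, hg, hrep⟩ := rep k
    have := hrep 0 le_rfl
    rw [if_neg (Nat.not_even_iff_odd.mpr hk)] at this
    rw [this, hf'0, zero_mul]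
  have hhfun : h = fun s => 2 / (α * lam0 ^ 2) * deriv f s := funext hh
  refine ⟨part1, ?_, ?_⟩
  · intro k hk
    have hsm : h = (2 / (α * lam0 ^ 2)) • deriv f := funext fun s => by
      rw [hh s]; rfl
    have h5 : iteratedDeriv k (deriv f) 0 = 0 := by
      rw [← iteratedDeriv_succ', part1 (k + 1) (Even.add_one hk)]
    rw [hsm, iteratedDeriv_eq_iteratedFDeriv,
      iteratedFDeriv_const_smul_apply (i := k) ((hdf.of_le (by exact_mod_cast le_top)).contDiffAt),
      ContinuousMultilinearMap.smul_apply, ← iteratedDeriv_eq_iteratedFDeriv, h5, smul_zero]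
  · rw [hhfun, deriv_const_mul _ (hdfd 0), hode 0 le_rfl, hf0, Real.one_rpow]
    field_simp
end

section
/- Let n ≥ 3 be an integer, fix real parameters λ₀ ∈ (0,1) and α with α > n − 2, and let f : ℝ → ℝ be smooth with f(s) > 0 for all s ≥ 0, satisfying f(0) = 1, f'(0) = 0, and f''(s) = (αλ₀²/2)·f(s)^(−α−1) for all s ≥ 0. Define h : ℝ → ℝ by h = (2/(αλ₀²))·f'. Then for every s > 0: −(n−1)·f''(s)/f(s) − h''(s)/h(s) > 0. -/
/-- First differential inequality `−(n−1)f''/f − h''/h > 0` for the warping functions built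
from the ODE `f'' = (αλ₀²/2)·f^(−α−1)` with `α > n − 2` and `h := (2/(αλ₀²))·f'`. -/
theorem sphere_warping_ineq_one (n : ℕ) (hn : 3 ≤ n) (lam0 α : ℝ)
    (hlam0 : lam0 ∈ Set.Ioo (0:ℝ) 1) (hα : (n:ℝ) - 2 < α)
    (f : ℝ → ℝ) (hf : ContDiff ℝ (⊤ : ℕ∞) f)
    (hfpos : ∀ s : ℝ, 0 ≤ s → 0 < f s)
    (hf0 : f 0 = 1) (hf'0 : deriv f 0 = 0)
    (hode : ∀ s : ℝ, 0 ≤ s → deriv (deriv f) s = α * lam0^2 / 2 * (f s) ^ (-α - 1))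
    (h : ℝ → ℝ) (hh : ∀ s : ℝ, h s = 2 / (α * lam0^2) * deriv f s) :
    ∀ s : ℝ, 0 < s →
      0 < -((n:ℝ) - 1) * (deriv (deriv f) s) / f s - (deriv (deriv h) s) / h s := by
  obtain ⟨hl0, hl1⟩ := hlam0
  intro s hs
  have hn3 : (3:ℝ) ≤ (n:ℝ) := by exact_mod_cast hn
  have hαpos : (0:ℝ) < α := by linarith
  set c : ℝ := α * lam0 ^ 2 / 2 with hc
  have hcpos : 0 < c := by positivity
  have hfd : Differentiable ℝ f := hf.differentiable (by simp)
  have hfinf : ContDiff ℝ (⊤ : ℕ∞) f := hf.of_le (by simp)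
  have hfd1 : Differentiable ℝ (deriv f) :=
    ((contDiff_infty_iff_deriv.mp hfinf).2).differentiable (by simp)
  -- f' is positive for s > 0
  have hf''pos : ∀ u ∈ interior (Set.Ici (0:ℝ)), 0 < deriv (deriv f) u := by
    intro u hu
    rw [interior_Ici] at hu
    rw [hode u (le_of_lt hu)]
    have := Real.rpow_pos_of_pos (hfpos u (le_of_lt hu)) (-α - 1)
    positivity
  have hmono := strictMonoOn_of_deriv_pos (convex_Ici (0:ℝ))
      hfd1.continuous.continuousOn hf''pos
  have hF' : 0 < deriv f s := by
    have := hmono (Set.self_mem_Ici) (Set.mem_Ici.mpr hs.le) hs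
    rwa [hf'0] at this
  have hF : 0 < f s := hfpos s hs.le
  have hFne : f s ≠ 0 := ne_of_gt hF
  have hF'ne : deriv f s ≠ 0 := ne_of_gt hF'
  set k : ℝ := 2 / (α * lam0 ^ 2) with hk
  have hkpos : 0 < k := by positivity
  -- h as a function
  have hhe : h = fun x => k * deriv f x := funext hh
  have hderivh : deriv h = fun x => k * deriv (deriv f) x := by
    rw [hhe]; funext x; exact deriv_const_mul_field k
  -- second derivative of f equals the ODE right-hand side near s
  have heq : deriv (deriv f) =ᶠ[nhds s] fun u => c * (f u) ^ (-α - 1) := by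
    filter_upwards [Ioi_mem_nhds hs] with u hu
    exact hode u (le_of_lt hu)
  have hd3 : deriv (deriv (deriv f)) s
      = c * (deriv f s * (-α - 1) * (f s) ^ (-α - 2)) := by
    rw [heq.deriv_eq]
    have hrp : HasDerivAt (fun u => (f u) ^ (-α - 1))
        (deriv f s * (-α - 1) * (f s) ^ (-α - 1 - 1)) s :=
      (hfd s).hasDerivAt.rpow_const (Or.inl hFne)
    have := (hrp.const_mul c).deriv
    rw [this]
    have : -α - 1 - 1 = -α - 2 := by ring
    rw [this]
  have hh'' : deriv (deriv h) s
      = k * (c * (deriv f s * (-α - 1) * (f s) ^ (-α - 2))) := by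
    rw [hderivh, deriv_const_mul_field k, hd3]
  -- rewrite f'' at s
  have hf''s : deriv (deriv f) s = c * ((f s) ^ (-α - 2) * f s) := by
    rw [hode s hs.le]
    congr 1
    rw [show (-α - 1) = (-α - 2) + 1 by ring, Real.rpow_add hF, Real.rpow_one]
  rw [hf''s, hh'', hh s]
  have hkc : k * c = 1 := by
    rw [hk, hc]; field_simp [hαpos.ne', hl0.ne']
  have key : -((n:ℝ) - 1) * (c * ((f s) ^ (-α - 2) * f s)) / f s -
      k * (c * (deriv f s * (-α - 1) * (f s) ^ (-α - 2))) / (k * deriv f s)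
      = c * (α + 2 - (n:ℝ)) * (f s) ^ (-α - 2) := by
    field_simp
    ring
  rw [key]
  have hrp2 : 0 < (f s) ^ (-α - 2) := Real.rpow_pos_of_pos hF _
  have : 0 < α + 2 - (n:ℝ) := by linarith
  positivity
end

section
/- Let n ≥ 3 be an integer, fix real parameters λ₀ ∈ (0,1) and α with n − 2 < α < (n−2)/λ₀², and let f : ℝ → ℝ be smooth with f(s) > 0 for all s ≥ 0, satisfying f(0) = 1, f'(0) = 0, and f''(s) = (αλ₀²/2)·f(s)^(−α−1) for all s ≥ 0. Define h : ℝ → ℝ by h = (2/(αλ₀²))·f'. Then for every s > 0: −f''(s)/f(s) + (n−2)·(1 − f'(s)²)/f(s)² − f'(s)h'(s)/(f(s)h(s)) > 0; in fact this quantity equals f(s)^(−2)·((−αλ₀² + (n−2)λ₀²)·f(s)^(−α) + (n−2)(1−λ₀²)) and is bounded below by f(s)^(−2)·((n−2) − αλ₀²) > 0. -/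
/-- Second differential inequality for the warping functions built from the ODE
`f'' = (αλ₀²/2)·f^(−α−1)` with `n − 2 < α < (n−2)/λ₀²` and `h := (2/(αλ₀²))·f'`:
the quantity `−f''/f + (n−2)(1−f'²)/f² − f'h'/(fh)` equals
`f^(−2)·((−αλ₀² + (n−2)λ₀²)f^(−α) + (n−2)(1−λ₀²))`, is bounded below by
`f^(−2)·((n−2) − αλ₀²)`, and is positive. -/
theorem sphere_warping_ineq_two (n : ℕ) (hn : 3 ≤ n) (lam0 α : ℝ)
    (hlam0 : lam0 ∈ Set.Ioo (0:ℝ) 1) (hα₁ : (n:ℝ) - 2 < α) (hα₂ : α < ((n:ℝ) - 2) / lam0^2)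
    (f : ℝ → ℝ) (hf : ContDiff ℝ (⊤ : ℕ∞) f)
    (hfpos : ∀ s : ℝ, 0 ≤ s → 0 < f s)
    (hf0 : f 0 = 1) (hf'0 : deriv f 0 = 0)
    (hode : ∀ s : ℝ, 0 ≤ s → deriv (deriv f) s = α * lam0^2 / 2 * (f s) ^ (-α - 1))
    (h : ℝ → ℝ) (hh : ∀ s : ℝ, h s = 2 / (α * lam0^2) * deriv f s) :
    ∀ s : ℝ, 0 < s →
      0 < -(deriv (deriv f) s) / f s + ((n:ℝ) - 2) * (1 - (deriv f s)^2) / (f s)^2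
            - (deriv f s) * (deriv h s) / (f s * h s) ∧
      -(deriv (deriv f) s) / f s + ((n:ℝ) - 2) * (1 - (deriv f s)^2) / (f s)^2
            - (deriv f s) * (deriv h s) / (f s * h s)
        = ((-α * lam0^2 + ((n:ℝ) - 2) * lam0^2) * (f s) ^ (-α)
            + ((n:ℝ) - 2) * (1 - lam0^2)) / (f s)^2 ∧
      (((n:ℝ) - 2) - α * lam0^2) / (f s)^2
        ≤ -(deriv (deriv f) s) / f s + ((n:ℝ) - 2) * (1 - (deriv f s)^2) / (f s)^2
            - (deriv f s) * (deriv h s) / (f s * h s) ∧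
      0 < (((n:ℝ) - 2) - α * lam0^2) / (f s)^2 := by
  obtain ⟨hl0, hl1⟩ := hlam0
  have hn2 : (1:ℝ) ≤ (n:ℝ) - 2 := by
    have : (3:ℝ) ≤ (n:ℝ) := by exact_mod_cast hn
    linarith
  have hαpos : 0 < α := by linarith
  have hl2 : 0 < lam0 ^ 2 := by positivity
  have hc : 0 < α * lam0 ^ 2 := by positivity
  have hαl : α * lam0 ^ 2 < (n:ℝ) - 2 := by
    nlinarith [(lt_div_iff₀ hl2).mp hα₂]
  have hfd : Differentiable ℝ f := hf.differentiable (by simp)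
  have hfinf : ContDiff ℝ ((⊤:ℕ∞) : WithTop ℕ∞) f := hf.of_le (by simp)
  have hf'c : ContDiff ℝ ((⊤:ℕ∞) : WithTop ℕ∞) (deriv f) := (contDiff_infty_iff_deriv.mp hfinf).2
  have hf'd : Differentiable ℝ (deriv f) := hf'c.differentiable (by simp)
  -- f' is strictly increasing on [0, ∞)
  have hf'mono : StrictMonoOn (deriv f) (Set.Ici (0:ℝ)) := by
    apply strictMonoOn_of_deriv_pos (convex_Ici 0) hf'd.continuous.continuousOn
    intro x hx
    rw [interior_Ici] at hx
    rw [hode x hx.le]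
    have := Real.rpow_pos_of_pos (hfpos x hx.le) (-α - 1)
    positivity
  have hf'pos : ∀ s : ℝ, 0 < s → 0 < deriv f s := by
    intro s hs
    have := hf'mono Set.self_mem_Ici hs.le hs
    rwa [hf'0] at this
  -- f is strictly increasing on [0, ∞), hence f ≥ 1
  have hfmono : StrictMonoOn f (Set.Ici (0:ℝ)) := by
    apply strictMonoOn_of_deriv_pos (convex_Ici 0) hfd.continuous.continuousOn
    intro x hx
    rw [interior_Ici] at hx
    exact hf'pos x hx
  have hf1 : ∀ s : ℝ, 0 ≤ s → 1 ≤ f s := by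
    intro s hs
    rcases eq_or_lt_of_le hs with h0 | h0
    · rw [← h0, hf0]
    · have := hfmono Set.self_mem_Ici hs h0
      rw [hf0] at this
      exact this.le
  -- energy identity : f'^2 + λ² f^(-α) = λ²  on [0,∞)
  set E : ℝ → ℝ := fun t => (deriv f t) ^ 2 + lam0 ^ 2 * f t ^ (-α) with hE
  have hEderiv : ∀ x : ℝ, 0 ≤ x → HasDerivAt E 0 x := by
    intro x hx
    have h1 : HasDerivAt (fun t => (deriv f t) ^ 2)
        (2 * deriv f x * deriv (deriv f) x) x := by
      have := ((hf'd x).hasDerivAt).fun_pow 2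
      simpa [mul_comm, mul_assoc, mul_left_comm] using this
    have h2 : HasDerivAt (fun t => f t ^ (-α))
        (deriv f x * (-α) * f x ^ (-α - 1)) x :=
      HasDerivAt.rpow_const ((hfd x).hasDerivAt) (Or.inl (ne_of_gt (hfpos x hx)))
    have h3 := h1.add (HasDerivAt.const_mul (lam0 ^ 2) h2)
    have : 2 * deriv f x * deriv (deriv f) x
        + lam0 ^ 2 * (deriv f x * (-α) * f x ^ (-α - 1)) = 0 := by
      rw [hode x hx]; ring
    rw [this] at h3
    exact h3
  have hEconst : ∀ s : ℝ, 0 ≤ s → E s = E 0 := by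
    intro s hs
    have hcont : ContinuousOn E (Set.Icc 0 s) := by
      apply ContinuousOn.add (hf'd.continuous.pow 2).continuousOn
      exact continuousOn_const.mul (ContinuousOn.rpow_const hfd.continuous.continuousOn
        (fun x hx => Or.inl (ne_of_gt (hfpos x hx.1))))
    exact constant_of_has_deriv_right_zero hcont
      (fun x hx => (hEderiv x hx.1).hasDerivWithinAt) s (Set.mem_Icc.mpr ⟨hs, le_refl s⟩)
  have hE0 : E 0 = lam0 ^ 2 := by
    simp [hE, hf'0, hf0]
  have henergy : ∀ s : ℝ, 0 ≤ s →
      (deriv f s) ^ 2 = lam0 ^ 2 * (1 - f s ^ (-α)) := by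
    intro s hs
    have := hEconst s hs
    rw [hE0] at this
    simp only [hE] at this
    linarith
  -- main computation at fixed s > 0
  intro s hs
  have hF : 0 < f s := hfpos s hs.le
  have hF1 : 1 ≤ f s := hf1 s hs.le
  have hf'sp : 0 < deriv f s := hf'pos s hs
  have hu : f s ^ (-α - 1) = f s ^ (-α) / f s := by
    rw [show (-α - 1) = (-α) + (-1) by ring, Real.rpow_add hF, Real.rpow_neg_one]
    ring
  set u : ℝ := f s ^ (-α) with hudef
  have hupos : 0 < u := Real.rpow_pos_of_pos hF _
  have hule : u ≤ 1 := Real.rpow_le_one_of_one_le_of_nonpos hF1 (by linarith)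
  have hds : deriv (deriv f) s = α * lam0 ^ 2 / 2 * (u / f s) := by
    rw [hode s hs.le, hu]
  have hhs : h s = 2 / (α * lam0 ^ 2) * deriv f s := hh s
  have hdh : deriv h s = 2 / (α * lam0 ^ 2) * (α * lam0 ^ 2 / 2 * (u / f s)) := by
    have hfun : h = fun t => 2 / (α * lam0 ^ 2) * deriv f t := funext hh
    rw [hfun, deriv_const_mul _ (hf'd s), hds]
  have hen : (deriv f s) ^ 2 = lam0 ^ 2 * (1 - u) := henergy s hs.le
  have hFne : f s ≠ 0 := ne_of_gt hF
  have hf'ne : deriv f s ≠ 0 := ne_of_gt hf'sp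
  have hcne : α * lam0 ^ 2 ≠ 0 := ne_of_gt hc
  have key : -(deriv (deriv f) s) / f s
        + ((n:ℝ) - 2) * (1 - (deriv f s) ^ 2) / (f s) ^ 2
        - (deriv f s) * (deriv h s) / (f s * h s)
      = ((-α * lam0 ^ 2 + ((n:ℝ) - 2) * lam0 ^ 2) * u + ((n:ℝ) - 2) * (1 - lam0 ^ 2))
          / (f s) ^ 2 := by
    rw [hds, hdh, hhs, hen]
    field_simp
    ring
  have hlow : (((n:ℝ) - 2) - α * lam0 ^ 2) / (f s) ^ 2
      ≤ ((-α * lam0 ^ 2 + ((n:ℝ) - 2) * lam0 ^ 2) * u + ((n:ℝ) - 2) * (1 - lam0 ^ 2))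
          / (f s) ^ 2 := by
    gcongr
    nlinarith [mul_nonneg (sub_nonneg.mpr hule) (sub_nonneg.mpr hα₁.le)]
  have hlp : 0 < (((n:ℝ) - 2) - α * lam0 ^ 2) / (f s) ^ 2 := by
    apply div_pos (by linarith) (by positivity)
  refine ⟨?_, key, ?_, hlp⟩
  · rw [key] at *
    exact lt_of_lt_of_le hlp hlow
  · rw [key]
    exact hlow
end
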